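/- Let L : ℝⁿ × ℝⁿ × ℝ → ℝ be C² and suppose L is hyperregular in the sense that there is a C¹ map g : ℝⁿ × ℝⁿ × ℝ → ℝⁿ with (∂L/∂v)(q, g(q, p, z), z) = p for all (q, p, z) and g(q, (∂L/∂v)(q, v, z), z) = v for all (q, v, z). Define the Hamiltonian H(q, p, z) = p·g(q, p, z) − L(q, g(q, p, z), z). If a C² curve (q(t), z(t)) satisfies the Herglotz equations, then the curve (q(t), p(t), z(t)) with p(t) = (∂L/∂v)(q(t), q̇(t), z(t)) satisfies the contact Hamilton equations q̇ = ∂H/∂p, ṗᵢ = −(∂H/∂qⁱ + pᵢ·∂H/∂z), ż = p·(∂H/∂p) − H. (Coordinate version of recovering the Hamiltonian dynamics from the unified/Lagrangian formalism via the Legendre map in the hyperregular case.) -/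

import Mathlib

open scoped BigOperators

noncomputable section

/-- Points of `TQ × ℝ` (coordinates `(q, v, z)`) or of `T*Q × ℝ`
(coordinates `(q, p, z)`). -/
abbrev LPt (n : ℕ) := (Fin n → ℝ) × (Fin n → ℝ) × ℝ

/-- Partial derivative in the `i`-th first-slot (`q`) direction. -/
def pderivQ {n : ℕ} (f : LPt n → ℝ) (x : LPt n) (i : Fin n) : ℝ :=
  fderiv ℝ f x (Pi.single i (1 : ℝ), (0 : Fin n → ℝ), (0 : ℝ))

/-- Partial derivative in the `i`-th middle-slot (`v` resp. `p`) direction. -/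
def pderivMid {n : ℕ} (f : LPt n → ℝ) (x : LPt n) (i : Fin n) : ℝ :=
  fderiv ℝ f x ((0 : Fin n → ℝ), Pi.single i (1 : ℝ), (0 : ℝ))

/-- Partial derivative in the last-slot (`z`) direction. -/
def pderivZ {n : ℕ} (f : LPt n → ℝ) (x : LPt n) : ℝ :=
  fderiv ℝ f x ((0 : Fin n → ℝ), (0 : Fin n → ℝ), (1 : ℝ))

/-- The Herglotz (generalized Euler–Lagrange) equations for a curve `t ↦ (q(t), z(t))`. -/
def Herglotz {n : ℕ} (L : LPt n → ℝ) (q : ℝ → Fin n → ℝ) (z : ℝ → ℝ) : Prop :=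
  ∀ t : ℝ, deriv z t = L (q t, deriv q t, z t) ∧
    ∀ i, deriv (fun s => pderivMid L (q s, deriv q s, z s) i) t -
        pderivQ L (q t, deriv q t, z t) i =
      pderivZ L (q t, deriv q t, z t) * pderivMid L (q t, deriv q t, z t) i

/-!
Because `∂L/∂v (q, g(q, p, z), z) = p`, the terms of `dH` that involve the derivative of `g`
cancel, leaving `∂H/∂p = g`, `∂H/∂q = -∂L/∂q` and `∂H/∂z = -∂L/∂z` at `(q, g(q, p, z), z)`.
Along `p = ∂L/∂v (q, q̇, z)` we have `g(q, p, z) = q̇`, and the contact Hamilton equations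
become the Herglotz equations.
-/

def legendreHamiltonian {n : ℕ} (L : LPt n → ℝ) (g : LPt n → Fin n → ℝ) (y : LPt n) : ℝ :=
  (∑ i, y.2.1 i * g y i) - L (y.1, g y, y.2.2)

section
variable {n : ℕ}

theorem fderiv_apply_mid_eq_sum_pderivMid (L : LPt n → ℝ) (x : LPt n) (D : Fin n → ℝ) :
    fderiv ℝ L x (0, D, 0) = ∑ i, D i * pderivMid L x i := by
  have hD : ((0 : Fin n → ℝ), D, (0 : ℝ)) =
      ∑ i, D i • ((0 : Fin n → ℝ), Pi.single i 1, (0 : ℝ)) := by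
    ext j <;> simp [Prod.fst_sum, Prod.snd_sum, Pi.single_apply]
  rw [hD, map_sum]
  simp only [map_smul, smul_eq_mul, pderivMid]

variable {L : LPt n → ℝ} {g : LPt n → Fin n → ℝ} {x : LPt n}

theorem fderiv_legendreHamiltonian_apply
    (hL : DifferentiableAt ℝ L (x.1, g x, x.2.2)) (hg : DifferentiableAt ℝ g x)
    (hlegendre : ∀ i, pderivMid L (x.1, g x, x.2.2) i = x.2.1 i) (w : LPt n) :
    fderiv ℝ (legendreHamiltonian L g) x w =
      (∑ i, w.2.1 i * g x i) - fderiv ℝ L (x.1, g x, x.2.2) (w.1, 0, w.2.2) := by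
  have hΦ : HasFDerivAt (fun y : LPt n => ((y.1, g y, y.2.2) : LPt n)) _ x :=
    hasFDerivAt_fst.prodMk (hg.hasFDerivAt.prodMk hasFDerivAt_snd.snd)
  have hS : HasFDerivAt (fun y : LPt n => ∑ i, y.2.1 i * g y i) _ x :=
    HasFDerivAt.fun_sum fun i _ =>
      (hasFDerivAt_pi'.1 hasFDerivAt_snd.fst i).fun_mul (hasFDerivAt_pi'.1 hg.hasFDerivAt i)
  have hLΦ : HasFDerivAt (fun y : LPt n => L (y.1, g y, y.2.2)) _ x :=
    hL.hasFDerivAt.comp x hΦ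
  have hsplit : ((w.1, fderiv ℝ g x w, w.2.2) : LPt n)
      = (w.1, 0, w.2.2) + ((0 : Fin n → ℝ), fderiv ℝ g x w, (0 : ℝ)) := by
    ext <;> simp
  unfold legendreHamiltonian
  rw [(hS.fun_sub hLΦ).fderiv]
  simp only [ContinuousLinearMap.comp_apply, ContinuousLinearMap.coe_snd',
    ContinuousLinearMap.coe_fst', ContinuousLinearMap.proj_apply, sub_apply,
    sum_apply, add_apply, smul_apply, smul_eq_mul, ContinuousLinearMap.prod_apply]
  rw [hsplit, map_add, fderiv_apply_mid_eq_sum_pderivMid]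
  simp only [hlegendre, Finset.sum_add_distrib, mul_comm (x.2.1 _), mul_comm (g x _)]
  ring

theorem pderivMid_legendreHamiltonian (hL : DifferentiableAt ℝ L (x.1, g x, x.2.2))
    (hg : DifferentiableAt ℝ g x) (hlegendre : ∀ i, pderivMid L (x.1, g x, x.2.2) i = x.2.1 i)
    (i : Fin n) : pderivMid (legendreHamiltonian L g) x i = g x i := by
  simp [pderivMid, fderiv_legendreHamiltonian_apply hL hg hlegendre, Pi.single_apply,
    Prod.mk_zero_zero]

theorem pderivQ_legendreHamiltonian (hL : DifferentiableAt ℝ L (x.1, g x, x.2.2))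
    (hg : DifferentiableAt ℝ g x) (hlegendre : ∀ i, pderivMid L (x.1, g x, x.2.2) i = x.2.1 i)
    (i : Fin n) : pderivQ (legendreHamiltonian L g) x i = -pderivQ L (x.1, g x, x.2.2) i := by
  simp [pderivQ, fderiv_legendreHamiltonian_apply hL hg hlegendre]

theorem pderivZ_legendreHamiltonian (hL : DifferentiableAt ℝ L (x.1, g x, x.2.2))
    (hg : DifferentiableAt ℝ g x) (hlegendre : ∀ i, pderivMid L (x.1, g x, x.2.2) i = x.2.1 i) :
    pderivZ (legendreHamiltonian L g) x = -pderivZ L (x.1, g x, x.2.2) := by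
  simp [pderivZ, fderiv_legendreHamiltonian_apply hL hg hlegendre]

theorem ContDiff.differentiable_pderivMid_comp (hL : ContDiff ℝ 2 L) {c : ℝ → LPt n}
    (hc : Differentiable ℝ c) (i : Fin n) : Differentiable ℝ fun s => pderivMid L (c s) i :=
  (((hL.fderiv_right (by norm_num)).differentiable one_ne_zero).clm_apply
    (differentiable_const _)).comp hc

end

/-- Coordinate version of recovering the Hamiltonian dynamics from the
unified/Lagrangian formalism via the Legendre map in the hyperregular case: if `L` is
hyperregular with fibrewise inverse `g` of the Legendre map and
`H(q,p,z) = p·g(q,p,z) − L(q,g(q,p,z),z)`, then every Herglotz solution `(q, z)`,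
transported by the Legendre map to `p = ∂L/∂v(q, q̇, z)`, satisfies the contact
Hamilton equations. -/
theorem herglotz_to_contact_hamilton (n : ℕ) (L : LPt n → ℝ)
    (hL : ContDiff ℝ 2 L)
    (g : LPt n → Fin n → ℝ) (hg : ContDiff ℝ 1 g)
    (hg₁ : ∀ Q P : Fin n → ℝ, ∀ Z : ℝ,
      (fun i => pderivMid L (Q, g (Q, P, Z), Z) i) = P)
    (hg₂ : ∀ Q V : Fin n → ℝ, ∀ Z : ℝ,
      g (Q, (fun i => pderivMid L (Q, V, Z) i), Z) = V)
    (H : LPt n → ℝ)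
    (hH : ∀ y : LPt n, H y = (∑ i, y.2.1 i * g y i) - L (y.1, g y, y.2.2))
    (q : ℝ → Fin n → ℝ) (z : ℝ → ℝ)
    (hcurve : ContDiff ℝ 2 (fun t => (q t, z t)))
    (hherglotz : Herglotz L q z)
    (p : ℝ → Fin n → ℝ)
    (hp : ∀ t : ℝ, p t = fun i => pderivMid L (q t, deriv q t, z t) i) :
    ∀ t : ℝ,
      (∀ i, deriv q t i = pderivMid H (q t, p t, z t) i) ∧
      (∀ i, deriv p t i =
        -(pderivQ H (q t, p t, z t) i + p t i * pderivZ H (q t, p t, z t))) ∧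
      deriv z t =
        (∑ i, p t i * pderivMid H (q t, p t, z t) i) - H (q t, p t, z t) := by
  obtain rfl : H = legendreHamiltonian L g := funext hH
  have hq : ContDiff ℝ 2 q := contDiff_fst.comp hcurve
  have hz : ContDiff ℝ 2 z := contDiff_snd.comp hcurve
  have hlift : Differentiable ℝ fun s => ((q s, deriv q s, z s) : LPt n) :=
    (hq.differentiable two_ne_zero).prodMk
      (hq.differentiable_deriv_two.prodMk (hz.differentiable two_ne_zero))
  intro t
  have hgx : g (q t, p t, z t) = deriv q t := by rw [hp t]; exact hg₂ _ _ _
  have hLx : DifferentiableAt ℝ L (q t, g (q t, p t, z t), z t) :=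
    hL.differentiable two_ne_zero _
  have hgd : DifferentiableAt ℝ g (q t, p t, z t) := hg.differentiable one_ne_zero _
  have hlegendre : ∀ i, pderivMid L (q t, g (q t, p t, z t), z t) i = p t i :=
    congrFun (hg₁ _ _ _)
  have hpdot : ∀ i, deriv p t i = deriv (fun s => pderivMid L (q s, deriv q s, z s) i) t := by
    rw [funext hp, deriv_pi fun i => (hL.differentiable_pderivMid_comp hlift i).differentiableAt]
    exact fun i => rfl
  obtain ⟨hzdot, hEL⟩ := hherglotz t
  refine ⟨fun i => ?_, fun i => ?_, ?_⟩
  · rw [pderivMid_legendreHamiltonian hLx hgd hlegendre, hgx]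
  · rw [pderivQ_legendreHamiltonian hLx hgd hlegendre,
      pderivZ_legendreHamiltonian hLx hgd hlegendre, hgx, hpdot, hp]
    linarith [hEL i]
  · simp only [pderivMid_legendreHamiltonian hLx hgd hlegendre, legendreHamiltonian, hgx, hzdot]
    ring

end
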